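/- Let T be the set of coefficient vectors a : Fin 9 → ℝ such that the polynomial g_a := Σ_{i=0}^{8} a_i X^i ∈ ℝ[X] has degree exactly 8, its image in ℂ[X] is squarefree, and g_a has no real root. Let T⁺ := {a ∈ T | g_a(x) > 0 for all x ∈ ℝ} and T⁻ := {a ∈ T | g_a(x) < 0 for all x ∈ ℝ}. Then T = T⁺ ∪ T⁻ with T⁺ ∩ T⁻ = ∅; T⁺ and T⁻ are each nonempty and path-connected (in the Euclidean topology on Fin 9 → ℝ); and no continuous path inside T joins a point of T⁺ to a point of T⁻. Hence T has exactly two path components. -/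

import Mathlib

/-- The real polynomial `g_a = Σ_{i=0}^{8} a_i X^i` associated to a coefficient
vector `a : Fin 9 → ℝ` (the dehomogenization of the real binary octic form
`p_a(x₀,x₁) = Σ a_i x₀^i x₁^{8−i}`). -/
noncomputable def polyOf (a : Fin 9 → ℝ) : Polynomial ℝ :=
  ∑ i : Fin 9, Polynomial.C (a i) * Polynomial.X ^ (i : ℕ)

/-- `T`: coefficient vectors of smooth real binary octics of type 4, i.e. `g_a` has
degree exactly 8, is squarefree over `ℂ`, and has no real root. -/
def Tset : Set (Fin 9 → ℝ) :=
  {a | (polyOf a).degree = 8 ∧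
       Squarefree ((polyOf a).map (algebraMap ℝ ℂ)) ∧
       ∀ x : ℝ, (polyOf a).eval x ≠ 0}

/-- `T⁺`: the everywhere-positive members of `T`. -/
def Tplus : Set (Fin 9 → ℝ) := {a ∈ Tset | ∀ x : ℝ, 0 < (polyOf a).eval x}

/-- `T⁻`: the everywhere-negative members of `T`. -/
def Tminus : Set (Fin 9 → ℝ) := {a ∈ Tset | ∀ x : ℝ, (polyOf a).eval x < 0}

/-! A real octic `g` that is positive on `ℝ` and squarefree over `ℂ` has four distinct roots
`z₁, …, z₄` in the upper half-plane, and `g = c · ∏ⱼ (X - zⱼ)(X - z̄ⱼ)` with `c > 0`; conversely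
every such product lies in `T⁺`. Hence `T⁺` is a continuous image of `(0, ∞) × Conf₄(ℍ)`, and
`Conf₄(ℍ) ≅ Conf₄(ℂ)` via `u ↦ re u + i·exp (im u)`. Configuration spaces of distinct points in `ℂ`
are path connected: the complex line through two configurations meets the diagonals in finitely
many parameters, and `ℂ` minus a finite set is path connected. Finally `T⁻ = -T⁺`, and along a
path in `T` the sign of `a₀ = g_a(0)` cannot change. -/

open Polynomial ComplexConjugate

section ContinuousCoeffs

variable {α R : Type*} [TopologicalSpace α] [TopologicalSpace R]

def ContinuousCoeffs [Semiring R] (F : α → R[X]) : Prop := ∀ n, Continuous fun a => (F a).coeff n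

theorem continuousCoeffs_const [Semiring R] (p : R[X]) : ContinuousCoeffs fun _ : α => p :=
  fun _ => continuous_const

theorem continuousCoeffs_C [Semiring R] {f : α → R} (hf : Continuous f) :
    ContinuousCoeffs fun a => C (f a) := by
  intro n
  simp only [coeff_C]
  split_ifs
  exacts [hf, continuous_const]

namespace ContinuousCoeffs

theorem comp [Semiring R] {β : Type*} [TopologicalSpace β] {F : α → R[X]}
    (hF : ContinuousCoeffs F) {f : β → α} (hf : Continuous f) :
    ContinuousCoeffs fun b => F (f b) := fun n => (hF n).comp hf

theorem add [Semiring R] [ContinuousAdd R] {F G : α → R[X]} (hF : ContinuousCoeffs F)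
    (hG : ContinuousCoeffs G) : ContinuousCoeffs fun a => F a + G a := fun n => by
  simp only [coeff_add]
  exact (hF n).add (hG n)

theorem sub [Ring R] [IsTopologicalRing R] {F G : α → R[X]} (hF : ContinuousCoeffs F)
    (hG : ContinuousCoeffs G) : ContinuousCoeffs fun a => F a - G a := fun n => by
  simp only [coeff_sub]
  exact (hF n).sub (hG n)

theorem mul [Semiring R] [IsTopologicalSemiring R] {F G : α → R[X]} (hF : ContinuousCoeffs F)
    (hG : ContinuousCoeffs G) : ContinuousCoeffs fun a => F a * G a := fun n => by
  simp only [coeff_mul]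
  exact continuous_finsetSum _ fun _ _ => (hF _).mul (hG _)

theorem finset_prod [CommSemiring R] [IsTopologicalSemiring R] {ι : Type*} (s : Finset ι)
    {F : ι → α → R[X]} (hF : ∀ i ∈ s, ContinuousCoeffs (F i)) :
    ContinuousCoeffs fun a => ∏ i ∈ s, F i a := by
  simpa only [← Finset.prod_apply] using
    Finset.prod_induction F ContinuousCoeffs (fun _ _ => mul) (continuousCoeffs_const 1) hF

end ContinuousCoeffs

end ContinuousCoeffs

theorem subsingleton_setOf_add_mul_eq_zero {d e : ℂ} (hd : d ≠ 0) :
    {s : ℂ | d + s * e = 0}.Subsingleton := by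
  intro s hs t ht
  simp only [Set.mem_ofPred_eq] at hs ht
  have he : e ≠ 0 := by rintro rfl; simp_all
  exact mul_right_cancel₀ he (by linear_combination hs - ht)

theorem countable_setOf_not_injective_lineMap {ι : Type*} [Countable ι] {z w : ι → ℂ}
    (hz : Function.Injective z) :
    {s : ℂ | ¬ Function.Injective fun j => z j + s * (w j - z j)}.Countable := by
  have hsub : {s : ℂ | ¬ Function.Injective fun j => z j + s * (w j - z j)} ⊆
      ⋃ (j) (k) (_ : j ≠ k), {s : ℂ | (z j - z k) + s * ((w j - z j) - (w k - z k)) = 0} := by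
    intro s hs
    simp only [Function.Injective, not_forall] at hs
    obtain ⟨j, k, hjk, hne⟩ := hs
    simp only [Set.mem_iUnion]
    exact ⟨j, k, hne, show _ = _ by linear_combination hjk⟩
  refine (Set.countable_iUnion fun j => Set.countable_iUnion fun k =>
    Set.countable_iUnion fun hjk => ?_).mono hsub
  exact (subsingleton_setOf_add_mul_eq_zero (sub_ne_zero.2 (hz.ne hjk))).countable

theorem isPathConnected_setOf_injective {ι : Type*} [Countable ι] :
    IsPathConnected {z : ι → ℂ | Function.Injective z} := by
  obtain ⟨f, hf⟩ := Countable.exists_injective_nat ι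
  refine isPathConnected_iff.2 ⟨⟨_, Nat.cast_injective.comp hf⟩, fun z hz w hw => ?_⟩
  have hgood := (countable_setOf_not_injective_lineMap (w := w) hz)
    |>.isPathConnected_compl_of_one_lt_rank (by simp [Complex.rank_real_complex])
  have hline : Continuous fun s : ℂ => fun j => z j + s * (w j - z j) := by fun_prop
  refine ((hgood.image hline).joinedIn z ⟨0, by simpa using hz, by simp⟩ w
    ⟨1, by simpa using hw, by simp⟩).mono ?_
  rintro _ ⟨s, hs, rfl⟩
  exact not_not.1 hs

theorem isPathConnected_setOf_injective_im_pos {ι : Type*} [Countable ι] :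
    IsPathConnected {w : ι → ℂ | Function.Injective w ∧ ∀ j, 0 < (w j).im} := by
  set chart : ℂ → ℂ := fun u => u.re + Real.exp u.im * Complex.I
  have chart_re (u : ℂ) : (chart u).re = u.re := by simp [chart]
  have chart_im (u : ℂ) : (chart u).im = Real.exp u.im := by simp [chart, Complex.exp_ofReal_re]
  have chart_injective : Function.Injective chart := fun u v h => Complex.ext
    (by simpa [chart_re] using congrArg Complex.re h)
    (Real.exp_injective (by simpa [chart_im] using congrArg Complex.im h))
  have heq : {w : ι → ℂ | Function.Injective w ∧ ∀ j, 0 < (w j).im} =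
      (fun u j => chart (u j)) '' {u | Function.Injective u} := by
    ext w
    constructor
    · rintro ⟨hw, hpos⟩
      set u : ι → ℂ := fun j => (w j).re + Real.log (w j).im * Complex.I
      have hchart : chart ∘ u = w := by
        funext j
        apply Complex.ext <;> simp [u, chart_re, chart_im, Real.exp_log (hpos j)]
      exact ⟨u, Function.Injective.of_comp (f := chart) (hchart ▸ hw), hchart⟩
    · rintro ⟨u, hu, rfl⟩
      exact ⟨chart_injective.comp hu, fun j => chart_im _ ▸ Real.exp_pos _⟩
  rw [heq]
  exact isPathConnected_setOf_injective.image (by fun_prop)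

noncomputable def conjQuadratic (z : ℂ) : ℝ[X] := X ^ 2 - C (2 * z.re) * X + C (‖z‖ ^ 2)

theorem map_conjQuadratic (z : ℂ) :
    (conjQuadratic z).map (algebraMap ℝ ℂ) = (X - C (conj z)) * (X - C z) := by
  calc
    _ = X ^ 2 - C (↑(2 * z.re) : ℂ) * X + C (‖z‖ ^ 2 : ℂ) := by simp [conjQuadratic]
    _ = (X - C (conj z)) * (X - C z) := by
      rw [← Complex.add_conj, map_add, ← Complex.mul_conj', map_mul]
      ring

theorem monic_conjQuadratic (z : ℂ) : (conjQuadratic z).Monic := by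
  unfold conjQuadratic; monicity!

theorem natDegree_conjQuadratic (z : ℂ) : (conjQuadratic z).natDegree = 2 := by
  unfold conjQuadratic; compute_degree!

theorem eval_conjQuadratic_pos {z : ℂ} (hz : z.im ≠ 0) (x : ℝ) :
    0 < (conjQuadratic z).eval x := by
  have : (conjQuadratic z).eval x = (x - z.re) ^ 2 + z.im ^ 2 := by
    simp only [conjQuadratic, eval_add, eval_sub, eval_pow, eval_X, eval_mul, eval_C,
      Complex.sq_norm, Complex.normSq_apply]
    ring
  rw [this]
  positivity

theorem continuousCoeffs_conjQuadratic : ContinuousCoeffs conjQuadratic :=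
  ((continuousCoeffs_const _).sub
    ((continuousCoeffs_C (by fun_prop)).mul (continuousCoeffs_const _))).add
    (continuousCoeffs_C (by fun_prop))

section UpperHalfPlane

variable {S : Finset ℂ}

theorem disjoint_image_conj (hS : ∀ z ∈ S, 0 < z.im) : Disjoint S (S.image conj) := by
  refine Finset.disjoint_left.2 fun z hz hz' => ?_
  obtain ⟨w, hw, rfl⟩ := Finset.mem_image.1 hz'
  have hw' := hS w hw
  have hz' := hS _ hz
  simp only [Complex.conj_im] at hz'
  linarith

theorem map_prod_conjQuadratic (hS : ∀ z ∈ S, 0 < z.im) :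
    (∏ z ∈ S, conjQuadratic z).map (algebraMap ℝ ℂ) = ∏ z ∈ S ∪ S.image conj, (X - C z) := by
  rw [Polynomial.map_prod, Finset.prod_union (disjoint_image_conj hS),
    Finset.prod_image fun _ _ _ _ h => (starRingEnd ℂ).injective h, ← Finset.prod_mul_distrib]
  simp only [map_conjQuadratic, mul_comm]

theorem natDegree_prod_conjQuadratic (S : Finset ℂ) :
    (∏ z ∈ S, conjQuadratic z).natDegree = 2 * S.card := by
  rw [natDegree_prod_of_monic _ _ fun z _ => monic_conjQuadratic z]
  simp [natDegree_conjQuadratic, mul_comm]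

theorem squarefree_map_C_mul_prod_conjQuadratic {c : ℝ} (hc : c ≠ 0) (hS : ∀ z ∈ S, 0 < z.im) :
    Squarefree ((C c * ∏ z ∈ S, conjQuadratic z).map (algebraMap ℝ ℂ)) := by
  rw [Polynomial.map_mul, map_prod_conjQuadratic hS, map_C]
  refine (associated_unit_mul_left _ _ ?_).squarefree_iff.2 ?_
  · exact isUnit_C.2 (by simpa using hc)
  · exact (separable_prod_X_sub_C_iff'.2 fun _ _ _ _ h => h).squarefree

end UpperHalfPlane

noncomputable def upperRoots (g : ℝ[X]) : Finset ℂ := (g.aroots ℂ).toFinset.filter (0 < ·.im)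

theorem aroots_toFinset_eq_union {g : ℝ[X]} (hg : ∀ x, g.eval x ≠ 0) :
    (g.aroots ℂ).toFinset = upperRoots g ∪ (upperRoots g).image conj := by
  have hg0 : g ≠ 0 := fun h => hg 0 (by simp [h])
  have hconj : ∀ z, z ∈ g.aroots ℂ → conj z ∈ g.aroots ℂ := fun z hz => by
    rw [mem_aroots] at hz ⊢
    simp [aeval_conj, hz.2, hg0]
  have him : ∀ z, z ∈ g.aroots ℂ → z.im ≠ 0 := fun z hz him => by
    rw [mem_aroots, ← Complex.re_add_im z, him] at hz
    exact hg z.re (by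
      simpa [← Complex.coe_algebraMap, aeval_algebraMap_apply_eq_algebraMap_eval] using hz.2)
  ext z
  simp only [upperRoots, Finset.mem_union, Finset.mem_filter, Multiset.mem_toFinset,
    Finset.mem_image]
  constructor
  · intro hz
    rcases (him z hz).lt_or_gt with h | h
    · exact Or.inr ⟨conj z, ⟨hconj z hz, by simpa using h⟩, by simp⟩
    · exact Or.inl ⟨hz, h⟩
  · rintro (⟨hz, -⟩ | ⟨w, ⟨hw, -⟩, rfl⟩)
    exacts [hz, hconj w hw]

theorem eq_C_mul_prod_conjQuadratic {g : ℝ[X]} (hsq : Squarefree (g.map (algebraMap ℝ ℂ)))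
    (hg : ∀ x, g.eval x ≠ 0) : g = C g.leadingCoeff * ∏ z ∈ upperRoots g, conjQuadratic z := by
  have hnodup : (g.aroots ℂ).Nodup := nodup_roots (PerfectField.separable_iff_squarefree.2 hsq)
  apply map_injective _ (algebraMap ℝ ℂ).injective
  rw [Polynomial.map_mul,
    map_prod_conjQuadratic (S := upperRoots g) fun z hz => (Finset.mem_filter.1 hz).2,
    ← aroots_toFinset_eq_union hg, map_C, Finset.prod_eq_multiset_prod,
    Multiset.toFinset_val, hnodup.dedup]
  conv_lhs => rw [(IsAlgClosed.splits (g.map (algebraMap ℝ ℂ))).eq_prod_roots]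
  simp

theorem Continuous.forall_pos_or_forall_neg {X : Type*} [TopologicalSpace X] [PreconnectedSpace X]
    {f : X → ℝ} (hf : Continuous f) (h0 : ∀ x, f x ≠ 0) : (∀ x, 0 < f x) ∨ ∀ x, f x < 0 := by
  by_contra! h
  obtain ⟨⟨x, hx⟩, ⟨y, hy⟩⟩ := h
  obtain ⟨z, hz⟩ := intermediate_value_univ x y hf ⟨hx, hy⟩
  exact h0 z hz

theorem coeff_polyOf (a : Fin 9 → ℝ) (i : Fin 9) : (polyOf a).coeff i = a i := by
  rw [polyOf, finsetSum_coeff, Finset.sum_eq_single i]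
  · simp
  · intro j _ hji
    simp [coeff_X_pow, Fin.val_eq_val, hji.symm]
  · simp

theorem eval_zero_polyOf (a : Fin 9 → ℝ) : (polyOf a).eval 0 = a 0 := by
  rw [← coeff_zero_eq_eval_zero]
  exact coeff_polyOf a 0

noncomputable def octicCoeffs (p : ℝ[X]) : Fin 9 → ℝ := fun i => p.coeff i

theorem octicCoeffs_polyOf (a : Fin 9 → ℝ) : octicCoeffs (polyOf a) = a :=
  funext (coeff_polyOf a)

theorem polyOf_octicCoeffs {p : ℝ[X]} (hp : p.natDegree ≤ 8) : polyOf (octicCoeffs p) = p := by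
  conv_rhs => rw [as_sum_range_C_mul_X_pow p]
  simp only [polyOf, octicCoeffs]
  rw [Fin.sum_univ_eq_sum_range (fun i => C (p.coeff i) * X ^ i)]
  exact (Finset.sum_subset (Finset.range_subset_range.2 (by omega)) fun i _ hi => by
    simp [coeff_eq_zero_of_natDegree_lt (by simpa using hi)]).symm

theorem octicCoeffs_mem_Tplus {c : ℝ} (hc : 0 < c) {S : Finset ℂ} (hS : ∀ z ∈ S, 0 < z.im)
    (hcard : S.card = 4) : octicCoeffs (C c * ∏ z ∈ S, conjQuadratic z) ∈ Tplus := by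
  have hdeg : (C c * ∏ z ∈ S, conjQuadratic z).natDegree = 8 := by
    rw [natDegree_C_mul hc.ne', natDegree_prod_conjQuadratic, hcard]
  have hpos (x : ℝ) : 0 < (C c * ∏ z ∈ S, conjQuadratic z).eval x := by
    rw [eval_mul, eval_C, eval_prod]
    exact mul_pos hc (Finset.prod_pos fun z hz => eval_conjQuadratic_pos (hS z hz).ne' x)
  refine ⟨⟨?_, ?_, ?_⟩, ?_⟩ <;> rw [polyOf_octicCoeffs hdeg.le]
  · exact (degree_eq_iff_natDegree_eq_of_pos (by norm_num)).2 hdeg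
  · exact squarefree_map_C_mul_prod_conjQuadratic hc.ne' hS
  · exact fun x => (hpos x).ne'
  · exact hpos

theorem exists_octicCoeffs_eq_of_mem_Tplus {a : Fin 9 → ℝ} (ha : a ∈ Tplus) :
    ∃ c > 0, ∃ S : Finset ℂ, (∀ z ∈ S, 0 < z.im) ∧ S.card = 4 ∧
      octicCoeffs (C c * ∏ z ∈ S, conjQuadratic z) = a := by
  obtain ⟨⟨hdeg, hsq, -⟩, hpos⟩ := ha
  have hfac := eq_C_mul_prod_conjQuadratic hsq fun x => (hpos x).ne'
  have hlead : 0 < (polyOf a).leadingCoeff := by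
    have h0 : 0 < eval 0 (C (polyOf a).leadingCoeff * ∏ z ∈ upperRoots (polyOf a),
        conjQuadratic z) := hfac ▸ hpos 0
    rw [eval_mul, eval_C, eval_prod] at h0
    exact (pos_iff_pos_of_mul_pos h0).2
      (Finset.prod_pos fun z hz => eval_conjQuadratic_pos (Finset.mem_filter.1 hz).2.ne' 0)
  have hcard : (upperRoots (polyOf a)).card = 4 := by
    have h8 : (C (polyOf a).leadingCoeff * ∏ z ∈ upperRoots (polyOf a),
        conjQuadratic z).natDegree = 8 := hfac ▸ natDegree_eq_of_degree_eq_some hdeg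
    rw [natDegree_C_mul hlead.ne', natDegree_prod_conjQuadratic] at h8
    omega
  exact ⟨_, hlead, upperRoots (polyOf a), fun z hz => (Finset.mem_filter.1 hz).2, hcard,
    by rw [← hfac, octicCoeffs_polyOf]⟩

theorem Tplus_eq_image :
    Tplus = (fun p : ℝ × (Fin 4 → ℂ) => octicCoeffs (C p.1 * ∏ j, conjQuadratic (p.2 j))) ''
      (Set.Ioi 0 ×ˢ {w | Function.Injective w ∧ ∀ j, 0 < (w j).im}) := by
  ext a
  constructor
  · intro ha
    obtain ⟨c, hc, S, hS, hcard, rfl⟩ := exists_octicCoeffs_eq_of_mem_Tplus ha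
    let e := S.equivFinOfCardEq hcard
    refine ⟨(c, fun j => e.symm j), ⟨hc, fun j k h => e.symm.injective (Subtype.ext h),
      fun j => hS _ (e.symm j).2⟩, ?_⟩
    simp only [e.symm.prod_comp fun z : S => conjQuadratic z, Finset.prod_coe_sort]
  · rintro ⟨⟨c, w⟩, ⟨hc, hw, hpos⟩, rfl⟩
    have := octicCoeffs_mem_Tplus hc (S := Finset.univ.image w) (by simpa using hpos)
      (by simp [Finset.card_image_of_injective _ hw])
    rwa [Finset.prod_image fun j _ k _ h => hw h] at this

theorem isPathConnected_Tplus : IsPathConnected Tplus := by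
  have hcoeffs : ContinuousCoeffs fun p : ℝ × (Fin 4 → ℂ) =>
      C p.1 * ∏ j, conjQuadratic (p.2 j) :=
    (continuousCoeffs_C continuous_fst).mul <| ContinuousCoeffs.finset_prod _ fun j _ =>
      continuousCoeffs_conjQuadratic.comp (by fun_prop)
  rw [Tplus_eq_image]
  exact (((convex_Ioi 0).isPathConnected (Set.nonempty_Ioi)).prod
    isPathConnected_setOf_injective_im_pos).image (continuous_pi fun i => hcoeffs i)

theorem polyOf_neg (a : Fin 9 → ℝ) : polyOf (-a) = -polyOf a := by
  simp only [polyOf, Pi.neg_apply, map_neg, neg_mul, Finset.sum_neg_distrib]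

theorem Tminus_eq_neg : Tminus = -Tplus := by
  ext a
  have hsq : Squarefree (-(polyOf a).map (algebraMap ℝ ℂ)) ↔
      Squarefree ((polyOf a).map (algebraMap ℝ ℂ)) := by
    rw [neg_eq_neg_one_mul]
    exact (associated_unit_mul_left _ _ isUnit_one.neg).squarefree_iff
  simp only [Set.mem_neg, Tminus, Tplus, Tset, Set.mem_ofPred_eq, polyOf_neg, degree_neg,
    Polynomial.map_neg, hsq, eval_neg, neg_ne_zero, neg_pos]

theorem isPathConnected_Tminus : IsPathConnected Tminus := by
  rw [Tminus_eq_neg, ← Set.image_neg_eq_neg]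
  exact isPathConnected_Tplus.image continuous_neg

theorem Tset_eq_union : Tset = Tplus ∪ Tminus := by
  ext a
  refine ⟨fun ha => ?_, fun ha => ha.elim (·.1) (·.1)⟩
  exact ((polyOf a).continuous.forall_pos_or_forall_neg ha.2.2).imp (⟨ha, ·⟩) (⟨ha, ·⟩)

theorem exists_path_not_mem_Tset {a b : Fin 9 → ℝ} (ha : a ∈ Tplus) (hb : b ∈ Tminus)
    (γ : Path a b) : ∃ t, γ t ∉ Tset := by
  by_contra! hγ
  have hsign := (continuous_apply 0 |>.comp γ.continuous).forall_pos_or_forall_neg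
    fun t => by simpa [eval_zero_polyOf] using (hγ t).2.2 0
  have ha0 : 0 < a 0 := eval_zero_polyOf a ▸ ha.2 0
  have hb0 : b 0 < 0 := eval_zero_polyOf b ▸ hb.2 0
  rcases hsign with h | h
  · exact (h 1).not_gt (by simpa using hb0)
  · exact (h 0).not_gt (by simpa using ha0)

theorem stmt18 :
    Tset = Tplus ∪ Tminus ∧
    Tplus ∩ Tminus = ∅ ∧
    Tplus.Nonempty ∧ Tminus.Nonempty ∧
    IsPathConnected Tplus ∧ IsPathConnected Tminus ∧
    ∀ a ∈ Tplus, ∀ b ∈ Tminus, ∀ γ : Path a b, ∃ t : unitInterval, γ t ∉ Tset := by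
  refine ⟨Tset_eq_union, ?_, isPathConnected_Tplus.nonempty, isPathConnected_Tminus.nonempty,
    isPathConnected_Tplus, isPathConnected_Tminus, fun a ha b hb => exists_path_not_mem_Tset ha hb⟩
  refine Set.eq_empty_iff_forall_notMem.2 fun a ⟨hplus, hminus⟩ => ?_
  exact (hplus.2 0).not_gt (hminus.2 0)
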